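/- Let Λ ⊆ ℝⁿ be an odd self-dual lattice and δ ∈ Λ with δ/2 ∉ Λ ∪ S(Λ) and δ² ∈ 4ℤ. If every vector in Λ_even = {λ ∈ Λ : δ·λ ∈ 2ℤ} has even norm, then δ is a characteristic vector of Λ (equivalently δ/2 ∈ S(Λ)), a contradiction; hence Λ_even contains a vector of odd norm. -/
import Mathlib


open scoped BigOperators

namespace PaperFormal

/-- Standard dot product on `ℝⁿ`. -/
def dot {n : ℕ} (x y : Fin n → ℝ) : ℝ := ∑ i, x i * y i

/-- Squared norm. -/
def nsq {n : ℕ} (x : Fin n → ℝ) : ℝ := dot x x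

/-- The dual of a set of vectors: all vectors pairing integrally with every element. -/
def dualSet {n : ℕ} (L : Set (Fin n → ℝ)) : Set (Fin n → ℝ) :=
  {x | ∀ l ∈ L, ∃ k : ℤ, dot l x = (k : ℝ)}

/-- The even-norm part `Λ₀` of a lattice. -/
def evenSub {n : ℕ} (L : Set (Fin n → ℝ)) : Set (Fin n → ℝ) :=
  {l | l ∈ L ∧ ∃ k : ℤ, dot l l = 2 * (k : ℝ)}

/-- The shadow `S(Λ) = Λ₀* \ Λ`. -/
def shadow {n : ℕ} (L : Set (Fin n → ℝ)) : Set (Fin n → ℝ) :=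
  dualSet (evenSub L) \ L

/-- An odd self-dual lattice: equal to its dual, and containing a vector of odd norm. -/
def IsOddSelfDual {n : ℕ} (L : Set (Fin n → ℝ)) : Prop :=
  L = dualSet L ∧ ∃ v ∈ L, ∃ k : ℤ, dot v v = 2 * (k : ℝ) + 1

/-- `χ` is a characteristic vector of `L`: `λ·λ ≡ χ·λ (mod 2)` for all `λ ∈ L`. -/
def IsCharacteristic {n : ℕ} (L : Set (Fin n → ℝ)) (χ : Fin n → ℝ) : Prop :=
  χ ∈ L ∧ ∀ l ∈ L, ∃ k : ℤ, dot l l - dot χ l = 2 * (k : ℝ)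

/-- `Λ_{δ-even}`. -/
def deltaEven {n : ℕ} (L : Set (Fin n → ℝ)) (δ : Fin n → ℝ) : Set (Fin n → ℝ) :=
  {l | l ∈ L ∧ ∃ k : ℤ, dot δ l = 2 * (k : ℝ)}

/-- `Λ_{δ-odd}`. -/
def deltaOdd {n : ℕ} (L : Set (Fin n → ℝ)) (δ : Fin n → ℝ) : Set (Fin n → ℝ) :=
  {l | l ∈ L ∧ ∃ k : ℤ, dot δ l = 2 * (k : ℝ) + 1}

/-- Translate a set of vectors by `v`. -/
def shiftSet {n : ℕ} (A : Set (Fin n → ℝ)) (v : Fin n → ℝ) : Set (Fin n → ℝ) :=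
  (fun x => x + v) '' A

/-- The orbifold lattice `Λ⁺ = Λ_even ∪ (Λ_even + δ/2)`. -/
def orbPlus {n : ℕ} (L : Set (Fin n → ℝ)) (δ : Fin n → ℝ) : Set (Fin n → ℝ) :=
  deltaEven L δ ∪ shiftSet (deltaEven L δ) ((2 : ℝ)⁻¹ • δ)

/-- The orbifold lattice `Λ⁻ = Λ_even ∪ (Λ_odd + δ/2)`. -/
def orbMinus {n : ℕ} (L : Set (Fin n → ℝ)) (δ : Fin n → ℝ) : Set (Fin n → ℝ) :=
  deltaEven L δ ∪ shiftSet (deltaOdd L δ) ((2 : ℝ)⁻¹ • δ)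

/-- The gauging condition for a shift vector: `δ ∈ Λ`, `δ/2 ∉ Λ ∪ S(Λ)`, `δ² ∈ 4ℤ`. -/
def GaugingCondition {n : ℕ} (L : Set (Fin n → ℝ)) (δ : Fin n → ℝ) : Prop :=
  δ ∈ L ∧ (2 : ℝ)⁻¹ • δ ∉ L ∧ (2 : ℝ)⁻¹ • δ ∉ shadow L ∧
    ∃ k : ℤ, dot δ δ = 4 * (k : ℝ)

/-- Inner product of codewords, valued in `ℤ/k`. -/
def codeDot {n k : ℕ} (c c' : Fin n → ZMod k) : ZMod k := ∑ i, c i * c' i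

/-- The dual code. -/
def dualCode {n k : ℕ} (C : Set (Fin n → ZMod k)) : Set (Fin n → ZMod k) :=
  {x | ∀ c ∈ C, codeDot c x = 0}

/-- Hamming weight of a binary codeword. -/
def wt {n : ℕ} (c : Fin n → ZMod 2) : ℕ :=
  (Finset.univ.filter fun i => c i = 1).card

/-- A singly-even self-dual binary code: self-dual, with some codeword of weight `≢ 0 (mod 4)`. -/
def IsSinglyEvenSelfDual {n : ℕ} (C : Set (Fin n → ZMod 2)) : Prop :=
  C = dualCode C ∧ ∃ c ∈ C, ¬ (4 ∣ wt c)

/-- Lift of a binary codeword to `{0,1}ⁿ ⊆ ℝⁿ`. -/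
def liftBin {n : ℕ} (c : Fin n → ZMod 2) : Fin n → ℝ := fun i => ((c i).val : ℝ)

/-- Construction A lattice of a binary code: `Λ(C) = {(c + 2m)/√2}`. -/
def constructionA {n : ℕ} (C : Set (Fin n → ZMod 2)) : Set (Fin n → ℝ) :=
  {x | ∃ c ∈ C, ∃ m : Fin n → ℤ,
    x = fun i => (liftBin c i + 2 * (m i : ℝ)) / Real.sqrt 2}

/-- Construction A lattice of a `ℤ/k` code: `Λ(C) = {(c + km)/√k}`. -/
def constructionAZ {n : ℕ} (k : ℕ) (C : Set (Fin n → ZMod k)) : Set (Fin n → ℝ) :=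
  {x | ∃ c ∈ C, ∃ m : Fin n → ℤ,
    x = fun i => (((c i).val : ℝ) + (k : ℝ) * (m i : ℝ)) / Real.sqrt k}

/-- The shift vector `δ = (1,…,1)/√2`. -/
noncomputable def deltaAll (n : ℕ) : Fin n → ℝ := fun _ => 1 / Real.sqrt 2

/-- Theta function of a set of vectors, `Θ_L(q) = Σ_{λ∈L} q^{λ²/2}`. -/
noncomputable def thetaSet {n : ℕ} (L : Set (Fin n → ℝ)) (q : ℝ) : ℝ :=
  ∑' l : L, q ^ (dot (l : Fin n → ℝ) (l : Fin n → ℝ) / 2)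

/-- Jacobi theta function `θ₂(q) = Σ_m q^{(m+1/2)²/2}`. -/
noncomputable def theta2 (q : ℝ) : ℝ := ∑' m : ℤ, q ^ (((m : ℝ) + 1 / 2) ^ 2 / 2)

/-- Jacobi theta function `θ₃(q) = Σ_m q^{m²/2}`. -/
noncomputable def theta3 (q : ℝ) : ℝ := ∑' m : ℤ, q ^ ((m : ℝ) ^ 2 / 2)

/-- Jacobi theta function `θ₄(q) = Σ_m (−1)^m q^{m²/2}`. -/
noncomputable def theta4 (q : ℝ) : ℝ := ∑' m : ℤ, (-1 : ℝ) ^ m * q ^ ((m : ℝ) ^ 2 / 2)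

/-- `ℤⁿ₊`: integer vectors with even coordinate sum. -/
def intEven (n : ℕ) : Set (Fin n → ℤ) := {m | Even (∑ i, m i)}

/-- `ℤⁿ₋`: integer vectors with odd coordinate sum. -/
def intOdd (n : ℕ) : Set (Fin n → ℤ) := {m | Odd (∑ i, m i)}

/-- The doubly-even subcode `C₀` of a binary code. -/
def doublyEvenSub {n : ℕ} (C : Set (Fin n → ZMod 2)) : Set (Fin n → ZMod 2) :=
  {c | c ∈ C ∧ wt c % 4 = 0}

/-- The code shadow `S(C) = C₀⊥ \ C`. -/
def codeShadow {n : ℕ} (C : Set (Fin n → ZMod 2)) : Set (Fin n → ZMod 2) :=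
  dualCode (doublyEvenSub C) \ C

lemma dot_comm' {n : ℕ} (x y : Fin n → ℝ) : dot x y = dot y x := by
  unfold dot; exact Finset.sum_congr rfl fun i _ => mul_comm _ _

lemma dot_add_right' {n : ℕ} (x y z : Fin n → ℝ) :
    dot x (y + z) = dot x y + dot x z := by
  unfold dot
  rw [← Finset.sum_add_distrib]
  exact Finset.sum_congr rfl fun i _ => by simp [mul_add]

lemma dot_smul_right' {n : ℕ} (c : ℝ) (x y : Fin n → ℝ) :
    dot x (c • y) = c * dot x y := by
  unfold dot
  rw [Finset.mul_sum]
  exact Finset.sum_congr rfl fun i _ => by simp; ring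

/-- if every vector of `Λ_even` had even norm then `δ` would be characteristic;
hence `Λ_even` contains a vector of odd norm. -/
theorem deltaEven_contains_odd_norm {n : ℕ} (L : Set (Fin n → ℝ))
    (hL : IsOddSelfDual L) (δ : Fin n → ℝ) (hδ : GaugingCondition L δ) :
    ((∀ v ∈ deltaEven L δ, ∃ k : ℤ, dot v v = 2 * (k : ℝ)) → IsCharacteristic L δ) ∧
    (∃ v ∈ deltaEven L δ, ∃ k : ℤ, dot v v = 2 * (k : ℝ) + 1) := by

  obtain ⟨hdual, v, hvL, kv, hkv⟩ := hL
  obtain ⟨hδL, hhalf, hshadow, kδ, hkδ⟩ := hδ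
  -- pairwise integrality
  have key : ∀ x ∈ L, ∀ y ∈ L, ∃ k : ℤ, dot x y = (k : ℝ) := by
    intro x hx y hy
    rw [hdual] at hy
    exact hy x hx
  -- closure under addition
  have hadd : ∀ x ∈ L, ∀ y ∈ L, x + y ∈ L := by
    intro x hx y hy
    rw [hdual]
    intro w hw
    obtain ⟨a, ha⟩ := key w hw x hx
    obtain ⟨b, hb⟩ := key w hw y hy
    exact ⟨a + b, by rw [dot_add_right', ha, hb]; push_cast; ring⟩
  have part1 : (∀ v ∈ deltaEven L δ, ∃ k : ℤ, dot v v = 2 * (k : ℝ)) →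
      IsCharacteristic L δ := by
    intro h
    refine ⟨hδL, ?_⟩
    intro l hl
    obtain ⟨dl, hdl⟩ := key δ hδL l hl
    obtain ⟨ll, hll⟩ := key l hl l hl
    obtain ⟨dv, hdv⟩ := key δ hδL v hvL
    have hllo : Even (ll - dl) → ∃ k : ℤ, dot l l - dot δ l = 2 * (k : ℝ) := by
      rintro ⟨m, hm⟩
      refine ⟨m, ?_⟩
      rw [hll, hdl]
      have : (ll : ℝ) - dl = 2 * m := by exact_mod_cast (by omega : ll - dl = 2 * m)
      linarith
    rcases Int.even_or_odd dl with hdle | hdlo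
    · -- δ·l even : l ∈ Λ_even so l² even
      obtain ⟨m, hm⟩ := hdle
      obtain ⟨e, he⟩ := h l ⟨hl, ⟨m, by rw [hdl, hm]; push_cast; ring⟩⟩
      have : (ll : ℝ) = 2 * e := by rw [← hll, he]
      have hlle : ll = 2 * e := by exact_mod_cast this
      exact hllo ⟨e - m, by omega⟩
    · rcases Int.even_or_odd dv with hdve | hdvo
      · -- δ·v even : v ∈ Λ_even has odd norm, contradiction with h
        obtain ⟨m, hm⟩ := hdve
        obtain ⟨e, he⟩ := h v ⟨hvL, ⟨m, by rw [hdv, hm]; push_cast; ring⟩⟩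
        have : (2 : ℝ) * e = 2 * kv + 1 := by rw [← he, hkv]
        have : (2 : ℤ) * e = 2 * kv + 1 := by exact_mod_cast this
        omega
      · -- δ·l odd, δ·v odd : l+v ∈ Λ_even
        obtain ⟨lv, hlv⟩ := key l hl v hvL
        have hsum : l + v ∈ deltaEven L δ := by
          refine ⟨hadd l hl v hvL, ?_⟩
          obtain ⟨a, ha⟩ := hdlo
          obtain ⟨b, hb⟩ := hdvo
          refine ⟨a + b + 1, ?_⟩
          rw [dot_add_right', hdl, hdv, ha, hb]; push_cast; ring
        obtain ⟨e, he⟩ := h (l + v) hsum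
        have hexp : dot (l + v) (l + v) = (ll : ℝ) + 2 * lv + (2 * kv + 1) := by
          rw [dot_add_right', dot_comm' (l+v) l, dot_comm' (l+v) v,
            dot_add_right', dot_add_right', dot_comm' v l, hll, hlv, hkv]
          ring
        have : (2 : ℝ) * e = ll + 2 * lv + (2 * kv + 1) := by rw [← he, hexp]
        have hint : (2 : ℤ) * e = ll + 2 * lv + (2 * kv + 1) := by exact_mod_cast this
        obtain ⟨a, ha⟩ := hdlo
        exact hllo ⟨(e - lv - kv - 1) - a, by omega⟩
  refine ⟨part1, ?_⟩
  by_contra hno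
  push_neg at hno
  have hall : ∀ w ∈ deltaEven L δ, ∃ k : ℤ, dot w w = 2 * (k : ℝ) := by
    intro w hw
    obtain ⟨m, hm⟩ := key w hw.1 w hw.1
    rcases Int.even_or_odd m with ⟨a, ha⟩ | ⟨a, ha⟩
    · exact ⟨a, by rw [hm, ha]; push_cast; ring⟩
    · exact absurd (by rw [hm, ha]; push_cast; ring : dot w w = 2 * (a : ℝ) + 1)
        (hno w hw a)
  obtain ⟨-, hchar⟩ := part1 hall
  apply hshadow
  refine ⟨?_, hhalf⟩
  intro l hl
  obtain ⟨k, hk⟩ := hl.2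
  obtain ⟨k', hk'⟩ := hchar l hl.1
  refine ⟨k - k', ?_⟩
  rw [dot_smul_right', dot_comm' δ l] at *
  push_cast
  linarith


end PaperFormal
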